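/- Let G = (V,E) be a connected, infinite, quasi-transitive, locally finite, simple graph with H ≤ Aut(G) acting quasi-transitively, and let φ, ψ : E → (0,∞) be H-invariant weight functions. Writing d_sup(φ,ψ) = sup_e |φ(e) − ψ(e)| and φ_min = inf_e φ(e), the connective constants satisfy (1 − d_sup(ψ,φ)/φ_min) ≤ μ(G,ψ)/μ(G,φ) ≤ (1 + d_sup(ψ,φ)/φ_min). In particular μ is continuous on the space of H-invariant weight functions with the supremum metric. -/
import Mathlib


open Filter Topology

/-- An `n`-step self-avoiding walk on the graph `G`. -/
def GraphSAW {V : Type*} (G : SimpleGraph V) (n : ℕ) (π : Fin (n + 1) → V) : Prop :=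
  Function.Injective π ∧ ∀ i : Fin n, G.Adj (π i.castSucc) (π i.succ)

/-- The weight of a walk: the product of the edge weights. -/
noncomputable def walkWeight {V : Type*} (φ : V → V → ℝ) (n : ℕ) (π : Fin (n + 1) → V) : ℝ :=
  ∏ i : Fin n, φ (π i.castSucc) (π i.succ)

/-- `w(Σ_n)`: the total weight of `n`-step self-avoiding walks from the root `v₀`. -/
noncomputable def sawWeight {V : Type*} (G : SimpleGraph V) (φ : V → V → ℝ)
    (v₀ : V) (n : ℕ) : ℝ :=
  ∑' π : {π : Fin (n + 1) → V // GraphSAW G n π ∧ π 0 = v₀}, walkWeight φ n π.1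

/-- Theorem 2.6: continuity of the connective constant in the weight function.
If `d` bounds `sup_e |φ(e) - ψ(e)|` and `0 < φmin ≤ φ` on edges with `d < φmin`,
then `(1 - d/φmin) ≤ μ(G,ψ)/μ(G,φ) ≤ (1 + d/φmin)`. -/
theorem connective_constant_continuity {V : Type*} (G : SimpleGraph V)
    (hconn : G.Connected) (hinf : Infinite V) (hlf : G.LocallyFinite)
    (H : Subgroup (G ≃g G))
    (hqt : ∃ s : Finset V, ∀ v : V, ∃ α ∈ H, ∃ u ∈ s, α u = v)
    (φ ψ : V → V → ℝ)
    (hφsym : ∀ u v : V, φ u v = φ v u) (hψsym : ∀ u v : V, ψ u v = ψ v u)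
    (hφpos : ∀ u v : V, G.Adj u v → 0 < φ u v)
    (hψpos : ∀ u v : V, G.Adj u v → 0 < ψ u v)
    (hφinv : ∀ α ∈ H, ∀ u v : V, φ (α u) (α v) = φ u v)
    (hψinv : ∀ α ∈ H, ∀ u v : V, ψ (α u) (α v) = ψ u v)
    (v₀ : V)
    (φmin d : ℝ) (hφmin : 0 < φmin)
    (hφlb : ∀ u v : V, G.Adj u v → φmin ≤ φ u v)
    (hd : ∀ u v : V, G.Adj u v → |φ u v - ψ u v| ≤ d)
    (hdlt : d < φmin)
    -- the connective constants, which exist by Theorem 2.1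
    (μφ μψ : ℝ) (hμφpos : 0 < μφ)
    (hμφ : Tendsto (fun n : ℕ => (sawWeight G φ v₀ n) ^ (1 / (n : ℝ))) atTop (𝓝 μφ))
    (hμψ : Tendsto (fun n : ℕ => (sawWeight G ψ v₀ n) ^ (1 / (n : ℝ))) atTop (𝓝 μψ)) :
    1 - d / φmin ≤ μψ / μφ ∧ μψ / μφ ≤ 1 + d / φmin := by
  classical
  -- there exists an edge, hence d ≥ 0
  obtain ⟨w, hw⟩ := exists_ne v₀
  obtain ⟨u, hadj⟩ : ∃ u, G.Adj v₀ u := by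
    obtain ⟨p⟩ := hconn v₀ w
    cases p with
    | nil => exact absurd rfl hw
    | cons h _ => exact ⟨_, h⟩
  have hd0 : 0 ≤ d := le_trans (abs_nonneg _) (hd _ _ hadj)
  set c1 : ℝ := 1 - d / φmin with hc1def
  set c2 : ℝ := 1 + d / φmin with hc2def
  have hdφ : 0 ≤ d / φmin := div_nonneg hd0 hφmin.le
  have hc1pos : 0 < c1 := by
    have : d / φmin < 1 := (div_lt_one hφmin).2 hdlt
    simp only [hc1def]; linarith
  have hc2pos : 0 < c2 := by simp only [hc2def]; linarith
  -- pointwise edge bounds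
  have edge_bd : ∀ a b : V, G.Adj a b →
      c1 * φ a b ≤ ψ a b ∧ ψ a b ≤ c2 * φ a b := by
    intro a b h
    have h1 : φmin ≤ φ a b := hφlb a b h
    have h2 : |φ a b - ψ a b| ≤ d := hd a b h
    rw [abs_le] at h2
    have h3 : φ a b - d ≤ ψ a b ∧ ψ a b ≤ φ a b + d :=
      ⟨by linarith [h2.2], by linarith [h2.1]⟩
    have hdle : d ≤ (d / φmin) * φ a b := by
      have : (d / φmin) * φmin ≤ (d / φmin) * φ a b :=
        mul_le_mul_of_nonneg_left h1 hdφ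
      rwa [div_mul_cancel₀ d hφmin.ne'] at this
    constructor
    · have : c1 * φ a b = φ a b - (d / φmin) * φ a b := by ring
      rw [this]; linarith [h3.1]
    · have : c2 * φ a b = φ a b + (d / φmin) * φ a b := by ring
      rw [this]; linarith [h3.2]
  -- pointwise walk-weight bounds
  have walk_bd : ∀ n (π : Fin (n+1) → V), GraphSAW G n π →
      c1 ^ n * walkWeight φ n π ≤ walkWeight ψ n π ∧
      walkWeight ψ n π ≤ c2 ^ n * walkWeight φ n π := by
    intro n π hπ
    have hterm : ∀ i : Fin n, 0 ≤ φ (π i.castSucc) (π i.succ) :=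
      fun i => (hφpos _ _ (hπ.2 i)).le
    constructor
    · have := Finset.prod_le_prod (s := Finset.univ) (f := fun i : Fin n => c1 * φ (π i.castSucc) (π i.succ))
        (g := fun i : Fin n => ψ (π i.castSucc) (π i.succ))
        (fun i _ => mul_nonneg hc1pos.le (hterm i))
        (fun i _ => (edge_bd _ _ (hπ.2 i)).1)
      simpa [walkWeight, Finset.prod_mul_distrib] using this
    · have := Finset.prod_le_prod (s := Finset.univ) (f := fun i : Fin n => ψ (π i.castSucc) (π i.succ))
        (g := fun i : Fin n => c2 * φ (π i.castSucc) (π i.succ))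
        (fun i _ => (hψpos _ _ (hπ.2 i)).le)
        (fun i _ => (edge_bd _ _ (hπ.2 i)).2)
      simpa [walkWeight, Finset.prod_mul_distrib] using this
  -- sawWeight bounds
  have saw_bd : ∀ n, c1 ^ n * sawWeight G φ v₀ n ≤ sawWeight G ψ v₀ n ∧
      sawWeight G ψ v₀ n ≤ c2 ^ n * sawWeight G φ v₀ n := by
    intro n
    set S := {π : Fin (n+1) → V // GraphSAW G n π ∧ π 0 = v₀} with hS
    have hg0 : ∀ π : S, 0 ≤ walkWeight φ n π.1 := fun π =>
      Finset.prod_nonneg fun i _ => (hφpos _ _ (π.2.1.2 i)).le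
    have hf0 : ∀ π : S, 0 ≤ walkWeight ψ n π.1 := fun π =>
      Finset.prod_nonneg fun i _ => (hψpos _ _ (π.2.1.2 i)).le
    have h1 : ∀ π : S, c1 ^ n * walkWeight φ n π.1 ≤ walkWeight ψ n π.1 :=
      fun π => (walk_bd n π.1 π.2.1).1
    have h2 : ∀ π : S, walkWeight ψ n π.1 ≤ c2 ^ n * walkWeight φ n π.1 :=
      fun π => (walk_bd n π.1 π.2.1).2
    by_cases hsum : Summable (fun π : S => walkWeight φ n π.1)
    · have hsum2 : Summable (fun π : S => c2 ^ n * walkWeight φ n π.1) :=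
        hsum.mul_left _
      have hsum1 : Summable (fun π : S => c1 ^ n * walkWeight φ n π.1) :=
        hsum.mul_left _
      have hsumψ : Summable (fun π : S => walkWeight ψ n π.1) :=
        Summable.of_nonneg_of_le hf0 h2 hsum2
      constructor
      · calc c1 ^ n * sawWeight G φ v₀ n
            = ∑' π : S, c1 ^ n * walkWeight φ n π.1 := (tsum_mul_left).symm
          _ ≤ ∑' π : S, walkWeight ψ n π.1 := Summable.tsum_le_tsum h1 hsum1 hsumψ
          _ = sawWeight G ψ v₀ n := rfl
      · calc sawWeight G ψ v₀ n
            = ∑' π : S, walkWeight ψ n π.1 := rfl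
          _ ≤ ∑' π : S, c2 ^ n * walkWeight φ n π.1 := Summable.tsum_le_tsum h2 hsumψ hsum2
          _ = c2 ^ n * sawWeight G φ v₀ n := tsum_mul_left
    · have hsumψ : ¬ Summable (fun π : S => walkWeight ψ n π.1) := by
        intro h
        apply hsum
        have hle : ∀ π : S, walkWeight φ n π.1 ≤ (c1 ^ n)⁻¹ * walkWeight ψ n π.1 := by
          intro π
          have hcn : 0 < c1 ^ n := pow_pos hc1pos n
          rw [le_inv_mul_iff₀ hcn]
          exact h1 π
        exact Summable.of_nonneg_of_le hg0 hle (h.mul_left _)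
      have e1 : sawWeight G φ v₀ n = 0 := tsum_eq_zero_of_not_summable hsum
      have e2 : sawWeight G ψ v₀ n = 0 := tsum_eq_zero_of_not_summable hsumψ
      rw [e1, e2]; simp
  have hA0 : ∀ n, 0 ≤ sawWeight G φ v₀ n := fun n =>
    tsum_nonneg fun π => Finset.prod_nonneg fun i _ => (hφpos _ _ (π.2.1.2 i)).le
  have hB0 : ∀ n, 0 ≤ sawWeight G ψ v₀ n := fun n =>
    tsum_nonneg fun π => Finset.prod_nonneg fun i _ => (hψpos _ _ (π.2.1.2 i)).le
  -- take n-th roots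
  have root_bd : ∀ c : ℝ, 0 < c → ∀ n : ℕ, 1 ≤ n → ∀ x y : ℝ, 0 ≤ x → 0 ≤ y →
      c ^ n * x ≤ y → c * x ^ (1 / (n : ℝ)) ≤ y ^ (1 / (n : ℝ)) := by
    intro c hc n hn x y hx hy hxy
    have hnR : (0:ℝ) < (n : ℝ) := by exact_mod_cast hn
    have h := Real.rpow_le_rpow (by positivity) hxy (by positivity : (0:ℝ) ≤ 1 / (n:ℝ))
    rwa [Real.mul_rpow (by positivity) hx, ← Real.rpow_natCast c n,
      ← Real.rpow_mul hc.le, mul_one_div, div_self hnR.ne', Real.rpow_one] at h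
  have hev1 : ∀ᶠ n : ℕ in atTop,
      c1 * (sawWeight G φ v₀ n) ^ (1 / (n : ℝ)) ≤ (sawWeight G ψ v₀ n) ^ (1 / (n : ℝ)) := by
    filter_upwards [eventually_ge_atTop 1] with n hn
    exact root_bd c1 hc1pos n hn _ _ (hA0 n) (hB0 n) (saw_bd n).1
  have hev2 : ∀ᶠ n : ℕ in atTop,
      (sawWeight G ψ v₀ n) ^ (1 / (n : ℝ)) ≤ c2 * (sawWeight G φ v₀ n) ^ (1 / (n : ℝ)) := by
    filter_upwards [eventually_ge_atTop 1] with n hn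
    have := root_bd c2⁻¹ (inv_pos.2 hc2pos) n hn _ _ (hB0 n) (hA0 n) ?_
    · rw [inv_mul_le_iff₀ hc2pos] at this
      exact this
    · rw [inv_pow, inv_mul_le_iff₀ (pow_pos hc2pos n)]
      exact (saw_bd n).2
  have lim1 : Tendsto (fun n : ℕ => c1 * (sawWeight G φ v₀ n) ^ (1 / (n : ℝ)))
      atTop (𝓝 (c1 * μφ)) := hμφ.const_mul c1
  have lim2 : Tendsto (fun n : ℕ => c2 * (sawWeight G φ v₀ n) ^ (1 / (n : ℝ)))
      atTop (𝓝 (c2 * μφ)) := hμφ.const_mul c2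
  have h1 : c1 * μφ ≤ μψ := le_of_tendsto_of_tendsto lim1 hμψ hev1
  have h2 : μψ ≤ c2 * μφ := le_of_tendsto_of_tendsto hμψ lim2 hev2
  exact ⟨(le_div_iff₀ hμφpos).2 h1, (div_le_iff₀ hμφpos).2 h2⟩
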